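/- arXiv:2007.06175 — 4 statements merged into one kernel-verified Lean document; each statement's English description precedes it below -/
import Mathlib

section
/- Let K ≥ 1 and let X : ℤ/Kℤ → ℝ and β⁽¹⁾, β⁽²⁾, β⁽³⁾, β⁽⁴⁾ : ℤ/Kℤ → ℝ, with all indices taken cyclically modulo K. Define for each k the quadratic expression Q_k = −X_{k−1}(β⁽¹⁾_k X_{k−2} − β⁽¹⁾_{k+1} X_{k+1}) − (β⁽²⁾_k X_{k−1} X_k − β⁽²⁾_{k+1} X_{k+1}²) − (β⁽³⁾_k X_k X_{k+1} − β⁽³⁾_{k−1} X_{k−1}²) − (β⁽⁴⁾_k X_{k−1} X_{k+1} − β⁽⁴⁾_{k+1} X_{k+1} X_{k+2}). Then ∑_{k ∈ ℤ/Kℤ} X_k Q_k = 0. -/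
open Finset

/-- The quadratic part of the modeled single-scale Lorenz 96 vector field,
with cyclic indices in `ℤ/Kℤ`. -/
def lorenz96Q {K : ℕ} (β1 β2 β3 β4 : ZMod K → ℝ) (X : ZMod K → ℝ)
    (k : ZMod K) : ℝ :=
  -(X (k - 1) * (β1 k * X (k - 2) - β1 (k + 1) * X (k + 1)))
    - (β2 k * X (k - 1) * X k - β2 (k + 1) * X (k + 1) ^ 2)
    - (β3 k * X k * X (k + 1) - β3 (k - 1) * X (k - 1) ^ 2)
    - (β4 k * X (k - 1) * X (k + 1) - β4 (k + 1) * X (k + 1) * X (k + 2))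

/-- The quadratic part of the modeled Lorenz 96 system is energy conserving:
`∑_{k ∈ ℤ/Kℤ} X_k Q_k = 0`. -/
theorem lorenz96_model_quadratic_energy_conserving (K : ℕ) [NeZero K]
    (X β1 β2 β3 β4 : ZMod K → ℝ) :
    ∑ k : ZMod K, X k * lorenz96Q β1 β2 β3 β4 X k = 0 := by
  set g : ZMod K → ℝ := fun k =>
    β1 k * X (k - 2) * X (k - 1) * X k + β2 k * X (k - 1) * X k ^ 2
      - β3 (k - 1) * X (k - 1) ^ 2 * X k + β4 k * X (k - 1) * X k * X (k + 1)
    with hg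
  have h : ∀ k : ZMod K, X k * lorenz96Q β1 β2 β3 β4 X k = g (k + 1) - g k := by
    intro k
    have e1 : k + 1 - 2 = k - 1 := by ring
    have e2 : k + 1 - 1 = k := by ring
    simp only [hg, lorenz96Q, e1, e2]
    ring
  rw [Finset.sum_congr rfl fun k _ => h k, Finset.sum_sub_distrib,
    Fintype.sum_equiv (Equiv.addRight (1 : ZMod K)) (fun k => g (k + 1)) g
      (fun k => rfl), sub_self]
end

section
/- Let K ≥ 1, let F ∈ ℝ, α : ℤ/Kℤ → ℝ, and β⁽¹⁾, β⁽²⁾, β⁽³⁾, β⁽⁴⁾ : ℤ/Kℤ → ℝ, and let G : ℝ^K → ℝ^K be the modeled Lorenz 96 vector field G_k(X) = Q_k(X) − α_k X_k + F, where Q_k is the quadratic part. Then for all X ∈ ℝ^K, ⟨X, G(X)⟩ ≤ (max_k |α_k| + 1/2) |X|² + (K F²)/2, where ⟨·,·⟩ and |·| are the Euclidean inner product and norm on ℝ^K. -/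
open Finset

/-- The modeled single-scale Lorenz 96 vector field
`G_k(X) = Q_k(X) − α_k X_k + F`. -/
def lorenz96G {K : ℕ} (F : ℝ) (α β1 β2 β3 β4 : ZMod K → ℝ)
    (X : ZMod K → ℝ) (k : ZMod K) : ℝ :=
  lorenz96Q β1 β2 β3 β4 X k - α k * X k + F

private lemma zmod_sum_shift {K : ℕ} [NeZero K] (f : ZMod K → ℝ) (c : ZMod K) :
    ∑ k : ZMod K, f (k + c) = ∑ k : ZMod K, f k :=
  Fintype.sum_equiv (Equiv.addRight c) _ _ (fun _ => rfl)

private lemma lorenz96Q_orth {K : ℕ} [NeZero K] (β1 β2 β3 β4 : ZMod K → ℝ)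
    (X : ZMod K → ℝ) :
    ∑ k : ZMod K, X k * lorenz96Q β1 β2 β3 β4 X k = 0 := by
  set a : ZMod K → ℝ := fun j => β1 j * X j * X (j - 1) * X (j - 2) with ha
  set b : ZMod K → ℝ := fun j => β2 j * X j ^ 2 * X (j - 1) with hb
  set c : ZMod K → ℝ := fun j => β3 j * X j ^ 2 * X (j + 1) with hc
  set d : ZMod K → ℝ := fun j => β4 j * X (j - 1) * X j * X (j + 1) with hd
  have key : ∀ k : ZMod K, X k * lorenz96Q β1 β2 β3 β4 X k =
      (a (k + 1) - a k) + (b (k + 1) - b k) + (c (k - 1) - c k)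
        + (d (k + 1) - d k) := by
    intro k
    have e1 : k + 1 - 1 = k := by ring
    have e2 : k + 1 - 2 = k - 1 := by ring
    have e3 : k - 1 + 1 = k := by ring
    have e4 : k + 1 + 1 = k + 2 := by ring
    simp only [lorenz96Q, ha, hb, hc, hd, e1, e2, e3, e4]
    ring
  rw [Finset.sum_congr rfl (fun k _ => key k)]
  have s1 := zmod_sum_shift a 1
  have s2 := zmod_sum_shift b 1
  have s3 := zmod_sum_shift (fun j => c (j - 1)) 1
  have s4 := zmod_sum_shift d 1
  simp only [add_sub_cancel_right] at s3
  simp [Finset.sum_add_distrib, Finset.sum_sub_distrib, s1, s2, s4, ← s3]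

/-- Euclidean energy bound for the modeled Lorenz 96 vector field:
`⟨X, G(X)⟩ ≤ (max_k |α_k| + 1/2) |X|² + K F²/2`. -/
theorem lorenz96_model_inner_bound (K : ℕ) [NeZero K] (F : ℝ)
    (α β1 β2 β3 β4 : ZMod K → ℝ) :
    ∀ X : ZMod K → ℝ,
      ∑ k : ZMod K, X k * lorenz96G F α β1 β2 β3 β4 X k ≤
        (Finset.univ.sup' ⟨(0 : ZMod K), Finset.mem_univ 0⟩ (fun k => |α k|)
            + 1 / 2) * ∑ k : ZMod K, (X k) ^ 2
          + (K : ℝ) * F ^ 2 / 2 := by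
  intro X
  set M := Finset.univ.sup' ⟨(0 : ZMod K), Finset.mem_univ 0⟩ (fun k => |α k|)
    with hM
  have hsplit : ∑ k : ZMod K, X k * lorenz96G F α β1 β2 β3 β4 X k =
      ∑ k : ZMod K, (-(α k * X k ^ 2) + F * X k) := by
    have : ∀ k : ZMod K, X k * lorenz96G F α β1 β2 β3 β4 X k =
        X k * lorenz96Q β1 β2 β3 β4 X k + (-(α k * X k ^ 2) + F * X k) := by
      intro k; simp only [lorenz96G]; ring
    rw [Finset.sum_congr rfl (fun k _ => this k), Finset.sum_add_distrib,
      lorenz96Q_orth, zero_add]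
  rw [hsplit]
  have hbound : ∀ k : ZMod K, -(α k * X k ^ 2) + F * X k ≤
      (M + 1 / 2) * X k ^ 2 + F ^ 2 / 2 := by
    intro k
    have h1 : -(α k * X k ^ 2) ≤ M * X k ^ 2 := by
      have hle : |α k| ≤ M := Finset.le_sup' (fun k => |α k|) (Finset.mem_univ k)
      have : -(α k) ≤ M := le_trans (neg_le_abs _) hle
      nlinarith [sq_nonneg (X k)]
    have h2 : F * X k ≤ X k ^ 2 / 2 + F ^ 2 / 2 := by nlinarith [sq_nonneg (F - X k)]
    nlinarith
  calc ∑ k : ZMod K, (-(α k * X k ^ 2) + F * X k)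
      ≤ ∑ k : ZMod K, ((M + 1 / 2) * X k ^ 2 + F ^ 2 / 2) :=
        Finset.sum_le_sum (fun k _ => hbound k)
    _ = (M + 1 / 2) * ∑ k : ZMod K, X k ^ 2 + (K : ℝ) * F ^ 2 / 2 := by
        rw [Finset.sum_add_distrib, ← Finset.mul_sum, Finset.sum_const]
        simp [ZMod.card]
        ring
end

section
/- Let K ≥ 1, F ∈ ℝ, α : ℤ/Kℤ → ℝ, β⁽¹⁾,…,β⁽⁴⁾ : ℤ/Kℤ → ℝ, and let G : ℝ^K → ℝ^K be the modeled Lorenz 96 vector field G_k(X) = Q_k(X) − α_k X_k + F. Then there exist constants c₁ ≥ 0 and c₂ > 0, depending only on max_k |α_k|, F, and K, such that every continuously differentiable function u : [0,T] → ℝ^K satisfying u′(t) = G(u(t)) for all t ∈ [0,T] obeys |u(t)|² ≤ (|u(0)|² + c₁) e^{c₂ t} for all t ∈ [0,T]. -/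
/-!
Along a solution, `V = |u|²` has `V' = 2 ⟨u, G(u)⟩`. The quadratic part drops out of this
pairing because `X_k Q_k(X)` is a sum of cyclic differences `f (k ± 1) - f k` of cubic
monomials, which telescope. What remains, `∑ (2 F X_k - 2 α_k X_k²)`, is at most
`(2 ∑|α_k| + 1) V + K F²`, and Gronwall's inequality gives the bound.
-/

open Finset

theorem Fintype.sum_comp_add_sub_eq_zero {G M : Type*} [AddGroup G] [Fintype G]
    [AddCommGroup M] (f : G → M) (a : G) : ∑ k, (f (k + a) - f k) = 0 := by
  rw [Finset.sum_sub_distrib, sub_eq_zero]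
  exact Equiv.sum_comp (Equiv.addRight a) f

theorem sum_mul_lorenz96Q_eq_zero {K : ℕ} [NeZero K] (β1 β2 β3 β4 X : ZMod K → ℝ) :
    ∑ k, X k * lorenz96Q β1 β2 β3 β4 X k = 0 := by
  let a k := β1 k * X (k - 2) * X (k - 1) * X k
  let b k := β2 k * X (k - 1) * X k ^ 2
  let c k := β3 k * X k ^ 2 * X (k + 1)
  let d k := β4 k * X (k - 1) * X k * X (k + 1)
  have telescoping : ∀ k, X k * lorenz96Q β1 β2 β3 β4 X k =
      (a (k + 1) - a k) + (b (k + 1) - b k) + (c (k + -1) - c k)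
        + (d (k + 1) - d k) := by
    intro k
    have e1 : k + 1 - 2 = k - 1 := by ring
    have e2 : k + 1 - 1 = k := by ring
    have e3 : k - 1 + 1 = k := by ring
    have e4 : k + 1 + 1 = k + 2 := by ring
    simp only [lorenz96Q, a, b, c, d, e1, e2, e3, e4, ← sub_eq_add_neg]
    ring
  simp only [telescoping, Finset.sum_add_distrib, Fintype.sum_comp_add_sub_eq_zero,
    add_zero]

theorem sum_two_mul_lorenz96G_le {K : ℕ} [NeZero K] (F : ℝ)
    (α β1 β2 β3 β4 X : ZMod K → ℝ) :
    ∑ k, 2 * X k * lorenz96G F α β1 β2 β3 β4 X k ≤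
      (2 * ∑ k, |α k| + 1) * ∑ k, X k ^ 2 + K * F ^ 2 := by
  have dissipative_part : ∑ k, 2 * X k * lorenz96G F α β1 β2 β3 β4 X k =
      ∑ k, (2 * F * X k - 2 * α k * X k ^ 2) := by
    calc ∑ k, 2 * X k * lorenz96G F α β1 β2 β3 β4 X k
        = 2 * ∑ k, X k * lorenz96Q β1 β2 β3 β4 X k
            + ∑ k, (2 * F * X k - 2 * α k * X k ^ 2) := by
          rw [Finset.mul_sum, ← Finset.sum_add_distrib]
          refine Finset.sum_congr rfl fun k _ => ?_
          simp only [lorenz96G]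
          ring
      _ = ∑ k, (2 * F * X k - 2 * α k * X k ^ 2) := by
          rw [sum_mul_lorenz96Q_eq_zero, mul_zero, zero_add]
  have termwise : ∀ k, 2 * F * X k - 2 * α k * X k ^ 2 ≤
      (2 * ∑ k, |α k| + 1) * X k ^ 2 + F ^ 2 := by
    intro k
    have hα : -α k ≤ ∑ k, |α k| :=
      (neg_le_abs (α k)).trans
        (Finset.single_le_sum (fun k _ => abs_nonneg (α k)) (mem_univ k))
    nlinarith [sq_nonneg (X k - F), mul_le_mul_of_nonneg_right hα (sq_nonneg (X k))]
  calc ∑ k, 2 * X k * lorenz96G F α β1 β2 β3 β4 X k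
      = ∑ k, (2 * F * X k - 2 * α k * X k ^ 2) := dissipative_part
    _ ≤ ∑ k, ((2 * ∑ k, |α k| + 1) * X k ^ 2 + F ^ 2) :=
        Finset.sum_le_sum fun k _ => termwise k
    _ = (2 * ∑ k, |α k| + 1) * ∑ k, X k ^ 2 + K * F ^ 2 := by
      rw [Finset.sum_add_distrib, ← Finset.mul_sum, Finset.sum_const, Finset.card_univ,
        ZMod.card, nsmul_eq_mul]

theorem hasDerivAt_sum_sq {ι : Type*} [Fintype ι] {u : ℝ → ι → ℝ} {u' : ι → ℝ}
    {t : ℝ} (hu : HasDerivAt u u' t) :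
    HasDerivAt (fun s => ∑ k, u s k ^ 2) (∑ k, 2 * u t k * u' k) t := by
  refine HasDerivAt.fun_sum fun k _ => ?_
  simpa using (hasDerivAt_pi.mp hu k).fun_pow 2

theorem le_add_div_mul_exp_of_hasDerivAt_le {f f' : ℝ → ℝ} {K ε T : ℝ} (hK : 0 < K)
    (hε : 0 ≤ ε) (hf : ∀ t ∈ Set.Icc 0 T, HasDerivAt f (f' t) t)
    (bound : ∀ t ∈ Set.Icc 0 T, f' t ≤ K * f t + ε) :
    ∀ t ∈ Set.Icc 0 T, f t ≤ (f 0 + ε / K) * Real.exp (K * t) := by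
  intro t ht
  have gronwall := le_gronwallBound_of_liminf_deriv_right_le
    (fun s hs => (hf s hs).continuousAt.continuousWithinAt)
    (fun s hs _ hr =>
      (hf s (Set.Ico_subset_Icc_self hs)).hasDerivWithinAt.liminf_right_slope_le hr)
    le_rfl (fun s hs => bound s (Set.Ico_subset_Icc_self hs)) t ht
  rw [sub_zero, gronwallBound_of_K_ne_0 hK.ne'] at gronwall
  have : 0 ≤ ε / K := div_nonneg hε hK.le
  linarith

/-- Moment bound for solutions of the modeled Lorenz 96 system: there are
constants `c₁ ≥ 0`, `c₂ > 0` (depending only on `max_k |α_k|`, `F` and `K`)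
such that every solution `u` of `u′ = G(u)` on `[0,T]` satisfies
`|u(t)|² ≤ (|u(0)|² + c₁) e^{c₂ t}`. -/
theorem lorenz96_model_solution_bound (K : ℕ) [NeZero K] (F : ℝ)
    (α : ZMod K → ℝ) :
    ∃ c₁ : ℝ, 0 ≤ c₁ ∧ ∃ c₂ : ℝ, 0 < c₂ ∧
      ∀ (β1 β2 β3 β4 : ZMod K → ℝ) (T : ℝ) (u : ℝ → ZMod K → ℝ),
        (∀ t ∈ Set.Icc (0 : ℝ) T,
          HasDerivAt u (fun k => lorenz96G F α β1 β2 β3 β4 (u t) k) t) →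
        ∀ t ∈ Set.Icc (0 : ℝ) T,
          ∑ k : ZMod K, (u t k) ^ 2 ≤
            (∑ k : ZMod K, (u 0 k) ^ 2 + c₁) * Real.exp (c₂ * t) := by
  set c₂ := 2 * ∑ k, |α k| + 1
  have hc₂ : 0 < c₂ := by positivity
  refine ⟨K * F ^ 2 / c₂, by positivity, c₂, hc₂, fun β1 β2 β3 β4 T u hu => ?_⟩
  exact le_add_div_mul_exp_of_hasDerivAt_le hc₂ (by positivity)
    (fun s hs => hasDerivAt_sum_sq (hu s hs))
    (fun s _ => sum_two_mul_lorenz96G_le F α β1 β2 β3 β4 (u s))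
end

section
/- Let L > 0, T > 0, and real coefficients α₁,…,α₅ and β₁,…,β₅ with α₄ > 0. Suppose u : [0,T] × ℝ → ℝ is jointly smooth (infinitely differentiable on [0,T] × ℝ), L-periodic in the space variable (u(t, x + L) = u(t, x) for all t, x), and satisfies the extended Kuramoto–Sivashinsky equation ∂_t u = −∑_{j=1}^{5} (α_j ∂_x^j u + β_j u^j ∂_x u) on [0,T] × ℝ. Then there exists a constant c > 0, depending only on α₂ and α₄ (one may take c = α₂²/(2α₄)), such that for all t ∈ [0,T], ∫₀^L u(t,x)² dx ≤ e^{ct} ∫₀^L u(0,x)² dx; in particular sup_{t ∈ [0,T]} ∫₀^L u(t,x)² dx ≤ e^{cT} ∫₀^L u(0,x)² dx. -/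
open Set intervalIntegral MeasureTheory

lemma deriv_periodic {f : ℝ → ℝ} {L : ℝ} (hf : ∀ x, f (x + L) = f x) :
    ∀ x, deriv f (x + L) = deriv f x := by
  intro x
  have h1 : (fun y => f (y + L)) = f := funext hf
  have := deriv_comp_add_const f L x
  rw [h1] at this
  exact this.symm

lemma iteratedDeriv_periodic {f : ℝ → ℝ} {L : ℝ} (hf : ∀ x, f (x + L) = f x) (n : ℕ) :
    ∀ x, iteratedDeriv n f (x + L) = iteratedDeriv n f x := by
  induction n with
  | zero => simpa using hf
  | succ n ih =>
    intro x
    rw [iteratedDeriv_succ]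
    exact deriv_periodic ih x

lemma integral_pow_mul_deriv_self {L : ℝ} {g : ℝ → ℝ} (hg : ContDiff ℝ (⊤ : ℕ∞) g)
    (hper : ∀ x, g (x + L) = g x) (m : ℕ) :
    ∫ x in (0:ℝ)..L, (g x) ^ m * deriv g x = 0 := by
  have hd : ∀ x : ℝ, HasDerivAt (fun y => (g y) ^ (m + 1) / (m + 1))
      ((g x) ^ m * deriv g x) x := by
    intro x
    have h1 : HasDerivAt g (deriv g x) x := (hg.differentiable (by simp) x).hasDerivAt
    have h2 := (h1.fun_pow (m + 1)).div_const ((m : ℝ) + 1)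
    refine h2.congr_deriv ?_
    have : ((m : ℝ) + 1) ≠ 0 := by positivity
    push_cast
    field_simp
  have hint : IntervalIntegrable (fun x => (g x) ^ m * deriv g x) MeasureTheory.volume 0 L :=
    (((hg.continuous.pow m)).mul (hg.continuous_deriv (by exact_mod_cast le_top))).intervalIntegrable 0 L
  rw [intervalIntegral.integral_eq_sub_of_hasDerivAt (fun x _ => hd x) hint]
  have : g L = g 0 := by simpa using hper 0
  rw [this]; ring

lemma integral_mul_deriv_periodic {L : ℝ} {a b : ℝ → ℝ}
    (ha : ContDiff ℝ (⊤ : ℕ∞) a) (hb : ContDiff ℝ (⊤ : ℕ∞) b)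
    (hpa : ∀ x, a (x + L) = a x) (hpb : ∀ x, b (x + L) = b x) :
    ∫ x in (0:ℝ)..L, a x * deriv b x = - ∫ x in (0:ℝ)..L, deriv a x * b x := by
  have H := intervalIntegral.integral_mul_deriv_eq_deriv_mul
    (u := a) (v := b) (u' := deriv a) (v' := deriv b) (a := (0:ℝ)) (b := L)
    (fun x _ => (ha.differentiable (by simp) x).hasDerivAt)
    (fun x _ => (hb.differentiable (by simp) x).hasDerivAt)
    ((ha.continuous_deriv (by exact_mod_cast le_top)).intervalIntegrable 0 L)
    ((hb.continuous_deriv (by exact_mod_cast le_top)).intervalIntegrable 0 L)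
  have haL : a L = a 0 := by simpa using hpa 0
  have hbL : b L = b 0 := by simpa using hpb 0
  rw [haL, hbL] at H
  rw [H]; ring

lemma contDiff_iteratedDeriv {f : ℝ → ℝ} (hf : ContDiff ℝ (⊤ : ℕ∞) f) (k : ℕ) :
    ContDiff ℝ (⊤ : ℕ∞) (iteratedDeriv k f) := by
  induction k with
  | zero => simpa [iteratedDeriv_zero] using hf
  | succ k ih =>
    rw [iteratedDeriv_succ]
    exact (contDiff_infty_iff_deriv.1 ih).2

/-- The main per-time-slice energy inequality. -/
lemma slice_bound {L : ℝ} (hL : 0 ≤ L) (α β : ℕ → ℝ) (hα₄ : 0 < α 4) {f : ℝ → ℝ}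
    (hf : ContDiff ℝ (⊤ : ℕ∞) f) (hper : ∀ x, f (x + L) = f x) :
    (∫ x in (0:ℝ)..L, 2 * f x *
        (-∑ j ∈ Finset.Icc 1 5, (α j * iteratedDeriv j f x + β j * f x ^ j * deriv f x)))
      ≤ (α 2 ^ 2 / (2 * α 4)) * ∫ x in (0:ℝ)..L, f x ^ 2 := by
  set D : ℕ → ℝ → ℝ := fun k => iteratedDeriv k f with hD
  have hDsm : ∀ k, ContDiff ℝ (⊤ : ℕ∞) (D k) := contDiff_iteratedDeriv hf
  have hDper : ∀ k x, D k (x + L) = D k x := iteratedDeriv_periodic hper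
  have hDderiv : ∀ k, deriv (D k) = D (k + 1) := fun k => (iteratedDeriv_succ).symm
  have hcont : ∀ k, Continuous (D k) := fun k => (hDsm k).continuous
  -- basic integrals
  have hpow : ∀ m : ℕ, ∫ x in (0:ℝ)..L, (f x) ^ m * deriv f x = 0 :=
    integral_pow_mul_deriv_self hf hper
  -- IBP helper between consecutive derivatives
  have hIBP : ∀ a b : ℕ, (∫ x in (0:ℝ)..L, D a x * D (b+1) x)
      = - ∫ x in (0:ℝ)..L, D (a+1) x * D b x := by
    intro a b
    have := integral_mul_deriv_periodic (hDsm a) (hDsm b) (hDper a) (hDper b)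
    rw [hDderiv a, hDderiv b] at this
    exact this
  have hzero : ∀ k : ℕ, ∫ x in (0:ℝ)..L, D k x * D (k+1) x = 0 := by
    intro k
    have := integral_pow_mul_deriv_self (hDsm k) (hDper k) 1
    rw [hDderiv k] at this
    simpa using this
  have hD0 : D 0 = f := iteratedDeriv_zero
  have hJ1 : ∫ x in (0:ℝ)..L, f x * D 1 x = 0 := by
    have := hzero 0; rwa [hD0] at this
  have hJ3 : ∫ x in (0:ℝ)..L, f x * D 3 x = 0 := by
    have h := hIBP 0 2
    rw [hD0] at h
    rw [h, hzero 1, neg_zero]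
  have hJ5 : ∫ x in (0:ℝ)..L, f x * D 5 x = 0 := by
    have h := hIBP 0 4
    rw [hD0] at h
    have h2 := hIBP 1 3
    rw [h, h2, hzero 2]
    ring
  have hJ4 : ∫ x in (0:ℝ)..L, f x * D 4 x = ∫ x in (0:ℝ)..L, D 2 x * D 2 x := by
    have h := hIBP 0 3
    rw [hD0] at h
    have h2 := hIBP 1 2
    rw [h, h2, neg_neg]
  -- rewrite the integrand as a finite sum of elementary terms
  have hsum : (∫ x in (0:ℝ)..L, 2 * f x *
        (-∑ j ∈ Finset.Icc 1 5, (α j * iteratedDeriv j f x + β j * f x ^ j * deriv f x)))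
      = ∑ j ∈ Finset.Icc 1 5, ((-2 * α j) * (∫ x in (0:ℝ)..L, f x * D j x)
          + (-2 * β j) * (∫ x in (0:ℝ)..L, (f x) ^ (j+1) * deriv f x)) := by
    rw [show (fun x => 2 * f x *
        (-∑ j ∈ Finset.Icc 1 5, (α j * iteratedDeriv j f x + β j * f x ^ j * deriv f x)))
        = fun x => ∑ j ∈ Finset.Icc 1 5, ((-2 * α j) * (f x * D j x)
          + (-2 * β j) * ((f x) ^ (j+1) * deriv f x)) from ?_]
    · rw [intervalIntegral.integral_finset_sum]
      · refine Finset.sum_congr rfl fun j _ => ?_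
        rw [intervalIntegral.integral_add, intervalIntegral.integral_const_mul, intervalIntegral.integral_const_mul]
        · exact (((continuous_const.mul (hf.continuous.mul (hcont j)))).intervalIntegrable 0 L)
        · exact ((continuous_const.mul ((hf.continuous.pow (j+1)).mul
            (hf.continuous_deriv (by exact_mod_cast le_top)))).intervalIntegrable 0 L)
      · intro j _
        exact (((continuous_const.mul (hf.continuous.mul (hcont j))).add
          (continuous_const.mul ((hf.continuous.pow (j+1)).mul
            (hf.continuous_deriv (by exact_mod_cast le_top))))).intervalIntegrable 0 L)
    · funext x
      rw [← Finset.sum_neg_distrib, Finset.mul_sum]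
      refine Finset.sum_congr rfl fun j _ => ?_
      simp only [hD]
      ring
  rw [hsum]
  -- evaluate the sum
  have hIcc : (Finset.Icc 1 5 : Finset ℕ) = {1, 2, 3, 4, 5} := rfl
  rw [hIcc]
  rw [Finset.sum_insert (by decide), Finset.sum_insert (by decide),
    Finset.sum_insert (by decide), Finset.sum_insert (by decide), Finset.sum_singleton]
  have hN : ∀ j : ℕ, ∫ x in (0:ℝ)..L, (f x) ^ (j+1) * deriv f x = 0 := fun j => hpow (j+1)
  rw [hN 1, hN 2, hN 3, hN 4, hN 5, hJ1, hJ3, hJ5, hJ4]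
  simp only [mul_zero, add_zero, zero_add]
  have h2α : (0:ℝ) < 2 * α 4 := by linarith
  have key : ∀ a b : ℝ, (-2 * α 2) * (a * b) + (-2 * α 4) * (b * b) ≤ α 2 ^ 2 / (2 * α 4) * a ^ 2 := by
    intro a b
    rw [← sub_nonneg]
    have h : α 2 ^ 2 / (2 * α 4) * a ^ 2 - ((-2 * α 2) * (a * b) + (-2 * α 4) * (b * b))
        = (α 2 * a + 2 * α 4 * b) ^ 2 / (2 * α 4) := by
      field_simp
      ring
    rw [h]
    positivity
  have hint1 : IntervalIntegrable
      (fun x => (-2 * α 2) * (f x * D 2 x) + (-2 * α 4) * (D 2 x * D 2 x))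
      MeasureTheory.volume 0 L :=
    ((continuous_const.mul (hf.continuous.mul (hcont 2))).add
      (continuous_const.mul ((hcont 2).mul (hcont 2)))).intervalIntegrable 0 L
  have hint2 : IntervalIntegrable (fun x => α 2 ^ 2 / (2 * α 4) * f x ^ 2)
      MeasureTheory.volume 0 L :=
    (continuous_const.mul (hf.continuous.pow 2)).intervalIntegrable 0 L
  have hmono := intervalIntegral.integral_mono_on hL hint1 hint2 (fun x _ => key (f x) (D 2 x))
  calc (-2 * α 2) * (∫ x in (0:ℝ)..L, f x * D 2 x)
        + (-2 * α 4) * (∫ x in (0:ℝ)..L, D 2 x * D 2 x)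
      = ∫ x in (0:ℝ)..L, ((-2 * α 2) * (f x * D 2 x) + (-2 * α 4) * (D 2 x * D 2 x)) := by
        rw [intervalIntegral.integral_add, intervalIntegral.integral_const_mul, intervalIntegral.integral_const_mul]
        · exact (continuous_const.mul (hf.continuous.mul (hcont 2))).intervalIntegrable 0 L
        · exact (continuous_const.mul ((hcont 2).mul (hcont 2))).intervalIntegrable 0 L
    _ ≤ ∫ x in (0:ℝ)..L, α 2 ^ 2 / (2 * α 4) * f x ^ 2 := hmono
    _ = α 2 ^ 2 / (2 * α 4) * ∫ x in (0:ℝ)..L, f x ^ 2 := intervalIntegral.integral_const_mul _ _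


/-- `L²` energy estimate for the extended Kuramoto–Sivashinsky equation
`∂ₜu = −∑_{j=1}^{5} (α_j ∂ₓʲu + β_j uʲ ∂ₓu)` with `α₄ > 0` on the torus
`[0, L]`: there is `c > 0` (one may take `c = α₂²/(2α₄)`) such that
`∫₀^L u(t,x)² dx ≤ e^{ct} ∫₀^L u(0,x)² dx` for all `t ∈ [0,T]`. -/
theorem extended_KS_energy_estimate (L T : ℝ) (hL : 0 < L) (hT : 0 < T)
    (α β : ℕ → ℝ) (hα₄ : 0 < α 4) (u : ℝ → ℝ → ℝ)
    (hsmooth : ContDiffOn ℝ (⊤ : ℕ∞) (fun p : ℝ × ℝ => u p.1 p.2)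
      (Set.Icc (0 : ℝ) T ×ˢ (Set.univ : Set ℝ)))
    (hper : ∀ t x : ℝ, u t (x + L) = u t x)
    (hpde : ∀ t ∈ Set.Icc (0 : ℝ) T, ∀ x : ℝ,
      deriv (fun s => u s x) t =
        -∑ j ∈ Finset.Icc 1 5,
          (α j * iteratedDeriv j (u t) x +
            β j * (u t x) ^ j * deriv (u t) x)) :
    ∃ c : ℝ, 0 < c ∧
      ∀ t ∈ Set.Icc (0 : ℝ) T,
        (∫ x in (0 : ℝ)..L, (u t x) ^ 2) ≤
          Real.exp (c * t) * ∫ x in (0 : ℝ)..L, (u 0 x) ^ 2 := by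
  have hsm : ContDiffOn ℝ (⊤ : ℕ∞) (fun p : ℝ × ℝ => u p.1 p.2)
      (Set.Icc (0 : ℝ) T ×ˢ (Set.univ : Set ℝ)) := hsmooth.of_le (by simp)
  set F : ℝ × ℝ → ℝ := fun p => u p.1 p.2 with hFdef
  -- smoothness of time slices
  have hslice : ∀ t ∈ Icc (0:ℝ) T, ContDiff ℝ (⊤ : ℕ∞) (u t) := by
    intro t ht
    rw [← contDiffOn_univ]
    have h1 : ContDiff ℝ (⊤ : ℕ∞) (fun x : ℝ => ((t, x) : ℝ × ℝ)) :=
      contDiff_const.prodMk contDiff_id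
    exact hsm.comp h1.contDiffOn (fun x _ => Set.mk_mem_prod ht (mem_univ x))
  -- the open strip
  set S : Set (ℝ × ℝ) := Ioo (0:ℝ) T ×ˢ (univ : Set ℝ) with hSdef
  have hSopen : IsOpen S := isOpen_Ioo.prod isOpen_univ
  have hSsub : S ⊆ Icc (0:ℝ) T ×ˢ (univ : Set ℝ) :=
    Set.prod_mono Ioo_subset_Icc_self subset_rfl
  have hsmS : ContDiffOn ℝ (⊤ : ℕ∞) F S := hsm.mono hSsub
  -- time derivative function
  set g : ℝ → ℝ → ℝ := fun t x => fderiv ℝ F (t, x) (1, 0) with hgdef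
  have hone : (1 : WithTop ℕ∞) ≤ (⊤ : ℕ∞) := by exact_mod_cast le_top
  have hdiff : ∀ t ∈ Ioo (0:ℝ) T, ∀ x : ℝ,
      HasDerivAt (fun s => u s x) (g t x) t := by
    intro t ht x
    have hmem : (t, x) ∈ S := Set.mk_mem_prod ht (mem_univ x)
    have hFd : DifferentiableAt ℝ F (t, x) :=
      (hsmS.contDiffAt (hSopen.mem_nhds hmem)).differentiableAt (by simp)
    have hl : HasDerivAt (fun s : ℝ => ((s, x) : ℝ × ℝ)) ((1 : ℝ), (0 : ℝ)) t :=
      (hasDerivAt_id t).prodMk (hasDerivAt_const t x)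
    exact hFd.hasFDerivAt.comp_hasDerivAt t hl
  -- continuity of the derivative on S
  have hGcont : ContinuousOn (fun p : ℝ × ℝ => 2 * u p.1 p.2 * g p.1 p.2) S := by
    have h1 : ContinuousOn (fderiv ℝ F) S :=
      hsmS.continuousOn_fderiv_of_isOpen hSopen hone
    have h2 : ContinuousOn (fun p : ℝ × ℝ => g p.1 p.2) S := by
      have := h1.clm_apply (continuousOn_const (c := ((1:ℝ), (0:ℝ))))
      simpa [hgdef] using this
    exact ((continuousOn_const.mul (hsmS.continuousOn)).mul h2)
  -- the energy
  set V : ℝ → ℝ := fun t => ∫ x in (0:ℝ)..L, (u t x) ^ 2 with hVdef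
  set φ : ℝ → ℝ := fun t => ∫ x in (0:ℝ)..L, 2 * u t x * g t x with hφdef
  -- derivative of V at interior times
  have hVderiv : ∀ t ∈ Ioo (0:ℝ) T, HasDerivAt V (φ t) t := by
    intro t₀ ht₀
    set ε : ℝ := min t₀ (T - t₀) / 2 with hεdef
    have hε : 0 < ε := by
      have := ht₀.1; have := ht₀.2
      apply div_pos _ two_pos
      exact lt_min (by linarith) (by linarith)
    have hballIcc : Metric.ball t₀ ε ⊆ Icc (t₀ - ε) (t₀ + ε) := by
      intro s hs
      rw [Metric.mem_ball, Real.dist_eq, abs_lt] at hs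
      constructor <;> linarith [hs.1, hs.2]
    have hIccIoo : Icc (t₀ - ε) (t₀ + ε) ⊆ Ioo (0:ℝ) T := by
      intro s hs
      have h1 : ε ≤ t₀ / 2 := by
        rw [hεdef]; gcongr; exact min_le_left _ _
      have h2 : ε ≤ (T - t₀) / 2 := by
        rw [hεdef]; gcongr; exact min_le_right _ _
      have := ht₀.1; have := ht₀.2
      constructor <;> [linarith [hs.1]; linarith [hs.2]]
    -- compact bound
    set K : Set (ℝ × ℝ) := Icc (t₀ - ε) (t₀ + ε) ×ˢ Icc (0:ℝ) L with hKdef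
    have hKcomp : IsCompact K := isCompact_Icc.prod isCompact_Icc
    have hKS : K ⊆ S := Set.prod_mono hIccIoo (subset_univ _)
    obtain ⟨C, hC⟩ := hKcomp.exists_bound_of_continuousOn (hGcont.mono hKS)
    have hmain := hasDerivAt_integral_of_dominated_loc_of_deriv_le
      (F := fun t x => (u t x) ^ 2) (F' := fun t x => 2 * u t x * g t x)
      (μ := volume) (x₀ := t₀) (a := (0:ℝ)) (b := L) (bound := fun _ => C) (Metric.ball_mem_nhds t₀ hε)
      ?_ ?_ ?_ ?_ ?_ ?_
    · exact hmain.2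
    · -- measurability nearby
      filter_upwards [isOpen_Ioo.mem_nhds ht₀] with t ht
      exact (((hslice t (Ioo_subset_Icc_self ht)).continuous.pow 2)).aestronglyMeasurable.restrict
    · exact (((hslice t₀ (Ioo_subset_Icc_self ht₀)).continuous.pow 2)).intervalIntegrable 0 L
    · -- measurability of F' t₀
      have hmapsTo : MapsTo (fun x : ℝ => ((t₀, x) : ℝ × ℝ)) univ S :=
        fun x _ => Set.mk_mem_prod ht₀ (mem_univ x)
      have : ContinuousOn (fun x : ℝ => 2 * u t₀ x * g t₀ x) univ :=
        hGcont.comp ((continuous_const.prodMk continuous_id).continuousOn) hmapsTo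
      rw [continuousOn_univ] at this
      exact this.aestronglyMeasurable.restrict
    · -- bound
      filter_upwards with x hx t ht
      rw [Set.uIoc_of_le hL.le] at hx
      have hxmem : x ∈ Icc (0:ℝ) L := ⟨hx.1.le, hx.2⟩
      have := hC (t, x) (Set.mk_mem_prod (hballIcc ht) hxmem)
      simpa using this
    · exact intervalIntegrable_const
    · -- differentiability
      filter_upwards with x hx t ht
      have htIoo : t ∈ Ioo (0:ℝ) T := hIccIoo (hballIcc ht)
      have := (hdiff t htIoo x).fun_pow 2
      simpa using this
  -- identify φ with the PDE right-hand side and bound it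
  have hc0 : (0:ℝ) ≤ α 2 ^ 2 / (2 * α 4) := by positivity
  set c : ℝ := α 2 ^ 2 / (2 * α 4) + 1 with hcdef
  have hcpos : 0 < c := by rw [hcdef]; positivity
  have hφle : ∀ t ∈ Ioo (0:ℝ) T, φ t ≤ (α 2 ^ 2 / (2 * α 4)) * V t := by
    intro t ht
    have htI : t ∈ Icc (0:ℝ) T := Ioo_subset_Icc_self ht
    have hgeq : ∀ x : ℝ, g t x =
        -∑ j ∈ Finset.Icc 1 5,
          (α j * iteratedDeriv j (u t) x + β j * (u t x) ^ j * deriv (u t) x) := by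
      intro x
      rw [← (hdiff t ht x).deriv]
      exact hpde t htI x
    have hφeq : φ t = ∫ x in (0:ℝ)..L, 2 * u t x *
        (-∑ j ∈ Finset.Icc 1 5,
          (α j * iteratedDeriv j (u t) x + β j * (u t x) ^ j * deriv (u t) x)) := by
      apply intervalIntegral.integral_congr
      intro x _
      dsimp only
      rw [hgeq x]
    rw [hφeq]
    exact slice_bound hL.le α β hα₄ (hslice t htI) (hper t)
  -- V is continuous on [0, T]
  have hVcont : ContinuousOn V (Icc (0:ℝ) T) := by
    have hVeq : ∀ t, V t = ∫ x in Ioc (0:ℝ) L, (u t x) ^ 2 := fun t =>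
      intervalIntegral.integral_of_le hL.le
    have hcompact : IsCompact (Icc (0:ℝ) T ×ˢ Icc (0:ℝ) L) := isCompact_Icc.prod isCompact_Icc
    have hsub2 : (Icc (0:ℝ) T ×ˢ Icc (0:ℝ) L) ⊆ Icc (0:ℝ) T ×ˢ (univ : Set ℝ) :=
      Set.prod_mono subset_rfl (subset_univ _)
    obtain ⟨C, hC⟩ := hcompact.exists_bound_of_continuousOn
      ((hsm.continuousOn).mono hsub2)
    have : ContinuousOn (fun t => ∫ x in Ioc (0:ℝ) L, (u t x) ^ 2) (Icc (0:ℝ) T) := by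
      apply MeasureTheory.continuousOn_of_dominated (bound := fun _ => C ^ 2 + 1)
      · intro t ht
        exact (((hslice t ht).continuous.pow 2)).aestronglyMeasurable.restrict
      · intro t ht
        rw [ae_restrict_iff' measurableSet_Ioc]
        filter_upwards with x hx
        have := hC (t, x) (Set.mk_mem_prod ht ⟨hx.1.le, hx.2⟩)
        have habs : |u t x| ≤ |C| := by
          rw [← Real.norm_eq_abs, ← Real.norm_eq_abs]
          exact le_trans this (le_abs_self C)
        have h2 : (u t x) ^ 2 ≤ C ^ 2 := by
          rw [← sq_abs (u t x), ← sq_abs C]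
          exact pow_le_pow_left₀ (abs_nonneg _) habs 2
        rw [Real.norm_eq_abs, abs_of_nonneg (sq_nonneg _)]
        linarith
      · exact integrable_const _
      · filter_upwards with x
        have h1 : ContinuousOn (fun t : ℝ => ((t, x) : ℝ × ℝ)) (Icc (0:ℝ) T) :=
          (continuous_id.prodMk continuous_const).continuousOn
        have h2 : MapsTo (fun t : ℝ => ((t, x) : ℝ × ℝ)) (Icc (0:ℝ) T)
            (Icc (0:ℝ) T ×ˢ (univ : Set ℝ)) := fun t ht => Set.mk_mem_prod ht (mem_univ x)
        exact ((hsm.continuousOn.comp h1 h2).pow 2)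
    exact ContinuousOn.congr this (fun t _ => hVeq t)
  have hVnonneg : ∀ t, 0 ≤ V t :=
    fun t => intervalIntegral.integral_nonneg hL.le (fun x _ => sq_nonneg _)
  -- the weighted energy W is antitone
  set W : ℝ → ℝ := fun t => Real.exp (-c * t) * V t with hWdef
  have hWderiv : ∀ t ∈ Ioo (0:ℝ) T,
      HasDerivAt W (Real.exp (-c * t) * (-c) * V t + Real.exp (-c * t) * φ t) t := by
    intro t ht
    have h1 : HasDerivAt (fun s : ℝ => -c * s) (-c) t := by
      simpa using (hasDerivAt_id t).const_mul (-c)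
    have h2 := h1.exp
    exact h2.mul (hVderiv t ht)
  have hWanti : AntitoneOn W (Icc (0:ℝ) T) := by
    apply antitoneOn_of_deriv_nonpos (convex_Icc (0:ℝ) T)
    · exact ((Real.continuous_exp.comp (continuous_const.mul continuous_id)).continuousOn).mul
        hVcont
    · intro t ht
      rw [interior_Icc] at ht
      exact ((hWderiv t ht).differentiableAt).differentiableWithinAt
    · intro t ht
      rw [interior_Icc] at ht
      rw [(hWderiv t ht).deriv]
      have hexp : (0:ℝ) < Real.exp (-c * t) := Real.exp_pos _
      have h1 := hφle t ht
      have h2 := hVnonneg t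
      have h3 : φ t ≤ c * V t - V t := by rw [hcdef]; nlinarith
      nlinarith
  -- conclude
  refine ⟨c, hcpos, fun t ht => ?_⟩
  have h0T : (0:ℝ) ∈ Icc (0:ℝ) T := ⟨le_refl _, hT.le⟩
  have hW := hWanti h0T ht ht.1
  have hW0 : W 0 = V 0 := by simp [hWdef]
  rw [hW0] at hW
  have hexp : (0:ℝ) < Real.exp (c * t) := Real.exp_pos _
  calc V t = Real.exp (c * t) * (Real.exp (-c * t) * V t) := by
        rw [← mul_assoc, ← Real.exp_add]
        simp
    _ ≤ Real.exp (c * t) * V 0 := by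
        apply mul_le_mul_of_nonneg_left hW hexp.le
end
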